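/- Let 𝔉 be a union-closed family of subsets of X = {a₁,…,aₙ}, with ℱ = φ_w(𝔉) for w = a₁a₂…aₙ. Then for any a ∈ X: |π_w(a)| − |σ_w(a)| = |P(𝔉,a)| − |S(𝔉,a)|, so Frankl's conjecture holds for 𝔉 if and only if |π_w(a)| ≥ |σ_w(a)| for some a ∈ X. Moreover |π_w(a)| ≤ |P(𝔉,a)| and |σ_w(a)| ≤ |S(𝔉,a)|. -/
import Mathlib


open Finset

variable {α : Type*} [DecidableEq α]

/-- A family is union-closed if it is closed under pairwise unions. -/
def UnionClosed (F : Finset (Finset α)) : Prop := ∀ f ∈ F, ∀ g ∈ F, f ∪ g ∈ F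

/-- One rising step: φ_{S,a}(z) = z ∪ {a} if z ∪ {a} ∉ S, and z otherwise. -/
def riseStep (S : Finset (Finset α)) (a : α) (z : Finset α) : Finset α :=
  if insert a z ∈ S then z else insert a z

/-- Iterated rising function along a word (list of letters): at each step the
current family is replaced by its image and the next letter is risen. -/
def riseWord (S : Finset (Finset α)) : List α → Finset α → Finset α
  | [], z => z
  | a :: u, z => riseWord (S.image (riseStep S a)) u (riseStep S a z)

/-- The section of a family along (a prefix of) a word. -/
def riseSections (S : Finset (Finset α)) : List α → Finset (Finset α)
  | [] => S
  | a :: u => riseSections (S.image (riseStep S a)) u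

/-- The spurious elements σ_w(𝔉,a): the elements η ∈ ℱ = φ_w(𝔉) with
a ∈ η \ φ_w⁻¹(η), i.e. η = φ_w(f) with f ∈ 𝔉, a ∉ f, a ∈ η. -/
def spurious (F : Finset (Finset α)) (w : List α) (a : α) : Finset (Finset α) :=
  ((F.filter fun f => a ∉ f).image (riseWord F w)).filter fun η => a ∈ η

/-- The pure elements π_w(𝔉,a): the elements η ∈ φ_w(𝔉_a) with η \ {a} ∉ ℱ. -/
def pureF (F : Finset (Finset α)) (w : List α) (a : α) : Finset (Finset α) :=
  ((F.filter fun f => a ∈ f).image (riseWord F w)).filter fun η =>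
    η.erase a ∉ F.image (riseWord F w)

/-- S(𝔉,a) = { z ∈ 𝔉 : z ∪ {a} ∉ 𝔉 }. -/
def setS (H : Finset (Finset α)) (a : α) : Finset (Finset α) :=
  H.filter fun z => insert a z ∉ H

/-- P(𝔉,a) = { z ∈ 𝔉 : a ∈ z and z \ {a} ∉ 𝔉 }. -/
def setP (H : Finset (Finset α)) (a : α) : Finset (Finset α) :=
  H.filter fun z => a ∈ z ∧ z.erase a ∉ H


section AuxLemmas

-- basic lemmas
lemma riseStep_subset (S : Finset (Finset α)) (a : α) (z : Finset α) :
    z ⊆ riseStep S a z := by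
  unfold riseStep; split <;> simp [Finset.subset_insert]

lemma riseStep_cases (S : Finset (Finset α)) (a : α) (z : Finset α) :
    (insert a z ∈ S ∧ riseStep S a z = z) ∨
    (insert a z ∉ S ∧ riseStep S a z = insert a z) := by
  unfold riseStep; split <;> simp_all

lemma subset_riseWord (w : List α) : ∀ (S : Finset (Finset α)) (z : Finset α),
    z ⊆ riseWord S w z := by
  induction w with
  | nil => intro S z; exact subset_rfl
  | cons b u ih =>
    intro S z
    exact (riseStep_subset S b z).trans (ih _ _)

lemma riseStep_injOn (S : Finset (Finset α)) (a : α) {z₁ z₂ : Finset α}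
    (h₁ : z₁ ∈ S) (h₂ : z₂ ∈ S) (h : riseStep S a z₁ = riseStep S a z₂) : z₁ = z₂ := by
  unfold riseStep at h
  split_ifs at h with c₁ c₂ c₂
  · exact h
  · exact absurd (h ▸ h₁) c₂
  · exact absurd (h ▸ h₂) c₁
  · have ha₁ : a ∉ z₁ := fun ha => c₁ (by rwa [Finset.insert_eq_self.mpr ha])
    have ha₂ : a ∉ z₂ := fun ha => c₂ (by rwa [Finset.insert_eq_self.mpr ha])
    rw [← Finset.erase_insert ha₁, ← Finset.erase_insert ha₂, h]

lemma image_riseWord_cons (S : Finset (Finset α)) (b : α) (u : List α) :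
    S.image (riseWord S (b :: u)) =
      (S.image (riseStep S b)).image (riseWord (S.image (riseStep S b)) u) := by
  rw [Finset.image_image]; rfl

lemma riseWord_injOn (w : List α) : ∀ (S : Finset (Finset α)), ∀ z₁ ∈ S, ∀ z₂ ∈ S,
    riseWord S w z₁ = riseWord S w z₂ → z₁ = z₂ := by
  induction w with
  | nil => intro S z₁ _ z₂ _ h; exact h
  | cons b u ih =>
    intro S z₁ h₁ z₂ h₂ h
    exact riseStep_injOn S b h₁ h₂
      (ih _ _ (Finset.mem_image_of_mem _ h₁) _ (Finset.mem_image_of_mem _ h₂) h)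

-- insert a x is in the image of the step rising a
lemma insert_mem_image_step (S : Finset (Finset α)) (a : α) {x : Finset α} (hx : x ∈ S) :
    insert a x ∈ S.image (riseStep S a) := by
  by_cases h : insert a x ∈ S
  · refine Finset.mem_image.mpr ⟨insert a x, h, ?_⟩
    unfold riseStep
    rw [if_pos (by rwa [Finset.insert_idem])]
  · refine Finset.mem_image.mpr ⟨x, hx, ?_⟩
    unfold riseStep
    rw [if_neg h]

lemma unionClosed_image_step {S : Finset (Finset α)} (hS : UnionClosed S) (a : α) :
    UnionClosed (S.image (riseStep S a)) := by
  intro f hf g hg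
  obtain ⟨f₀, hf₀, rfl⟩ := Finset.mem_image.mp hf
  obtain ⟨g₀, hg₀, rfl⟩ := Finset.mem_image.mp hg
  have hu : f₀ ∪ g₀ ∈ S := hS _ hf₀ _ hg₀
  rcases riseStep_cases S a f₀ with ⟨cf, ef⟩ | ⟨cf, ef⟩ <;>
    rcases riseStep_cases S a g₀ with ⟨cg, eg⟩ | ⟨cg, eg⟩ <;> rw [ef, eg]
  · -- both kept
    have : insert a (f₀ ∪ g₀) ∈ S := by
      have := hS _ cf _ hg₀
      rwa [Finset.insert_union] at this
    refine Finset.mem_image.mpr ⟨f₀ ∪ g₀, hu, ?_⟩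
    unfold riseStep; rw [if_pos this]
  · have : f₀ ∪ insert a g₀ = insert a (f₀ ∪ g₀) := by
      rw [Finset.union_insert]
    rw [this]; exact insert_mem_image_step S a hu
  · have : insert a f₀ ∪ g₀ = insert a (f₀ ∪ g₀) := by
      rw [Finset.insert_union]
    rw [this]; exact insert_mem_image_step S a hu
  · have : insert a f₀ ∪ insert a g₀ = insert a (f₀ ∪ g₀) := by
      rw [Finset.insert_union, Finset.union_insert, Finset.insert_idem]
    rw [this]; exact insert_mem_image_step S a hu

-- step preserves a-fullness (given union-closedness), stated at source level
lemma step_full {S : Finset (Finset α)} {a : α} (b : α) (hS : UnionClosed S)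
    (hfull : ∀ y ∈ S, insert a y ∈ S) :
    ∀ y ∈ S.image (riseStep S b), insert a y ∈ S.image (riseStep S b) := by
  intro y hy
  obtain ⟨y₀, hy₀, rfl⟩ := Finset.mem_image.mp hy
  rcases riseStep_cases S b y₀ with ⟨c, e⟩ | ⟨c, e⟩ <;> rw [e]
  · -- kept: insert b y₀ ∈ S; show insert a y₀ ∈ image
    have h1 : insert a y₀ ∈ S := hfull _ hy₀
    have h2 : insert b (insert a y₀) ∈ S := by
      have := hS _ c _ h1
      rwa [Finset.insert_union, Finset.union_insert, Finset.union_self] at this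
    refine Finset.mem_image.mpr ⟨insert a y₀, h1, ?_⟩
    unfold riseStep; rw [if_pos h2]
  · -- risen: show insert a (insert b y₀) ∈ image
    rw [Finset.insert_comm]
    exact insert_mem_image_step S b (hfull _ hy₀)

lemma image_step_self_full (S : Finset (Finset α)) (b : α) :
    ∀ y ∈ S.image (riseStep S b), insert b y ∈ S.image (riseStep S b) := by
  intro y hy
  obtain ⟨y₀, hy₀, rfl⟩ := Finset.mem_image.mp hy
  rcases riseStep_cases S b y₀ with ⟨c, e⟩ | ⟨c, e⟩ <;> rw [e]
  · exact insert_mem_image_step S b hy₀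
  · rw [Finset.insert_idem]; exact insert_mem_image_step S b hy₀

lemma full_pres {a : α} (u : List α) : ∀ (S : Finset (Finset α)), UnionClosed S →
    (∀ y ∈ S, insert a y ∈ S) →
    ∀ y ∈ S.image (riseWord S u), insert a y ∈ S.image (riseWord S u) := by
  induction u with
  | nil =>
    intro S _ hfull y hy
    simp only [riseWord, Finset.image_id'] at *
    exact hfull y hy
  | cons b v ih =>
    intro S hS hfull y hy
    rw [image_riseWord_cons] at hy ⊢
    exact ih _ (unionClosed_image_step hS b) (step_full b hS hfull) y hy

lemma full_final {a : α} (w : List α) : ∀ (S : Finset (Finset α)), UnionClosed S → a ∈ w →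
    ∀ y ∈ S.image (riseWord S w), insert a y ∈ S.image (riseWord S w) := by
  induction w with
  | nil => intro S _ h; cases h
  | cons b v ih =>
    intro S hS hmem y hy
    rw [image_riseWord_cons] at hy ⊢
    rcases List.mem_cons.mp hmem with rfl | hmem'
    · exact full_pres v _ (unionClosed_image_step hS a) (image_step_self_full S a) y hy
    · exact ih _ (unionClosed_image_step hS b) hmem' y hy

/-- If `insert a z` already belongs to the (union-closed) family, then rising never adds `a`. -/
lemma rise_no_a {a : α} (w : List α) : ∀ (S : Finset (Finset α)) (z : Finset α),
    UnionClosed S → a ∉ z → insert a z ∈ S → a ∉ riseWord S w z := by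
  induction w with
  | nil => intro S z _ ha _; exact ha
  | cons b u ih =>
    intro S z hS ha hins
    show a ∉ riseWord (S.image (riseStep S b)) u (riseStep S b z)
    rcases riseStep_cases S b z with ⟨c, e⟩ | ⟨c, e⟩ <;> rw [e]
    · -- kept
      refine ih _ z (unionClosed_image_step hS b) ha ?_
      have h2 : insert b (insert a z) ∈ S := by
        have := hS _ c _ hins
        rwa [Finset.insert_union, Finset.union_insert, Finset.union_self] at this
      refine Finset.mem_image.mpr ⟨insert a z, hins, ?_⟩
      unfold riseStep; rw [if_pos h2]
    · -- risen: b ≠ a since insert a z ∈ S but insert b z ∉ S... in fact b ≠ a directly: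
      have hba : b ≠ a := by rintro rfl; exact c hins
      refine ih _ (insert b z) (unionClosed_image_step hS b) (by simp [ha, hba.symm]) ?_
      rw [Finset.insert_comm]
      exact insert_mem_image_step S b hins

/-- Preservation of the invariant J: every member of the family included in the tracked set
contains `a`. -/
lemma J_pres {a : α} (u : List α) : ∀ (S : Finset (Finset α)) (y : Finset α),
    UnionClosed S → y ∈ S → (∀ t ∈ S, t ⊆ y → a ∈ t) →
    ∀ t ∈ S.image (riseWord S u), t ⊆ riseWord S u y → a ∈ t := by
  induction u with
  | nil =>
    intro S y _ _ hJ t ht hty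
    simp only [riseWord, Finset.image_id'] at *
    exact hJ t ht hty
  | cons b v ih =>
    intro S y hS hy hJ t ht hty
    rw [image_riseWord_cons] at ht
    have hy' : riseStep S b y ∈ S.image (riseStep S b) := Finset.mem_image_of_mem _ hy
    refine ih _ (riseStep S b y) (unionClosed_image_step hS b) hy' ?_ t ht hty
    -- J holds one step later
    intro t' ht' hsub
    by_contra hat
    obtain ⟨s, hs, rfl⟩ := Finset.mem_image.mp ht'
    have hst' : s ⊆ riseStep S b s := riseStep_subset S b s
    rcases riseStep_cases S b y with ⟨cy, ey⟩ | ⟨cy, ey⟩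
    · -- y kept: anything ⊆ y, and s ⊆ riseStep S b s ⊆ y
      rw [ey] at hsub
      exact hat (hst' (hJ s hs (hst'.trans hsub)))
    · -- y risen to insert b y
      rw [ey] at hsub
      rcases riseStep_cases S b s with ⟨cs, es⟩ | ⟨cs, es⟩
      · -- s kept: contradiction with insert b y ∉ S via union-closedness
        rw [es] at hsub hat
        have hm : insert b s ∪ y ∈ S := hS _ cs _ hy
        have hmeq : insert b s ∪ y = insert b y := by
          apply Finset.Subset.antisymm
          · apply Finset.union_subset
            · exact Finset.insert_subset (Finset.mem_insert_self _ _) hsub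
            · exact Finset.subset_insert _ _
          · apply Finset.insert_subset
            · exact Finset.mem_union_left _ (Finset.mem_insert_self _ _)
            · exact Finset.subset_union_right
        rw [hmeq] at hm
        exact cy hm
      · -- s risen: then b ∉ s, so s ⊆ y, so a ∈ s ⊆ t'
        rw [es] at hsub hat
        have hbs : b ∉ s := fun hb => cs (by rwa [Finset.insert_eq_self.mpr hb])
        have hsy : s ⊆ y := by
          intro x hx
          rcases Finset.mem_insert.mp (hsub (Finset.mem_insert_of_mem hx)) with rfl | h
          · exact absurd hx hbs
          · exact h
        exact hat (Finset.mem_insert_of_mem (hJ s hs hsy))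

lemma spurious_key {a : α} (w : List α) : ∀ (S : Finset (Finset α)) (z : Finset α),
    UnionClosed S → z ∈ S → a ∉ z → a ∈ riseWord S w z →
    ∀ t ∈ S.image (riseWord S w), t ⊆ riseWord S w z → a ∈ t := by
  induction w with
  | nil => intro S z _ _ ha h; exact absurd h ha
  | cons b u ih =>
    intro S z hS hz ha hrise t ht hty
    rw [image_riseWord_cons] at ht
    have hrise' : a ∈ riseWord (S.image (riseStep S b)) u (riseStep S b z) := hrise
    have hty' : t ⊆ riseWord (S.image (riseStep S b)) u (riseStep S b z) := hty
    have hz' : riseStep S b z ∈ S.image (riseStep S b) := Finset.mem_image_of_mem _ hz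
    by_cases haz : a ∈ riseStep S b z
    · -- a was just added: b = a and insert a z ∉ S
      rcases riseStep_cases S b z with ⟨c, e⟩ | ⟨c, e⟩
      · rw [e] at haz; exact absurd haz ha
      · rw [e] at haz hz' hty'
        have hba : b = a := by
          rcases Finset.mem_insert.mp haz with h | h
          · exact h.symm
          · exact absurd h ha
        subst hba
        refine J_pres u _ (insert b z) (unionClosed_image_step hS b) hz' ?_ t ht hty'
        -- initial J
        intro t' ht' hsub
        by_contra hat
        obtain ⟨s, hs, rfl⟩ := Finset.mem_image.mp ht'
        rcases riseStep_cases S b s with ⟨cs, es⟩ | ⟨cs, es⟩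
        · rw [es] at hsub hat
          have hsz : s ⊆ z := by
            intro x hx
            rcases Finset.mem_insert.mp (hsub hx) with rfl | h
            · exact absurd hx hat
            · exact h
          have : insert b s ∪ z ∈ S := hS _ cs _ hz
          have heq : insert b s ∪ z = insert b z := by
            apply Finset.Subset.antisymm
            · exact Finset.union_subset
                (Finset.insert_subset (Finset.mem_insert_self _ _)
                  (hsz.trans (Finset.subset_insert _ _))) (Finset.subset_insert _ _)
            · exact Finset.insert_subset (Finset.mem_union_left _ (Finset.mem_insert_self _ _))
                Finset.subset_union_right
          rw [heq] at this
          exact c this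
        · rw [es] at hat
          exact hat (Finset.mem_insert_self _ _)
    · -- a not yet present: recurse
      exact ih _ (riseStep S b z) (unionClosed_image_step hS b) hz' haz hrise' t ht hty'

lemma spurious_erase_notMem {a : α} {w : List α} {S : Finset (Finset α)} {z : Finset α}
    (hS : UnionClosed S) (hz : z ∈ S) (ha : a ∉ z) (hrise : a ∈ riseWord S w z) :
    (riseWord S w z).erase a ∉ S.image (riseWord S w) := by
  intro hmem
  exact Finset.notMem_erase a _
    (spurious_key w S z hS hz ha hrise _ hmem (Finset.erase_subset _ _))

lemma matching (H : Finset (Finset α)) (a : α) :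
    ((H.filter fun z => a ∈ z).card : ℤ) - (H.filter fun z => a ∉ z).card =
      (setP H a).card - (setS H a).card := by
  classical
  set M1 := H.filter (fun z => a ∉ z ∧ insert a z ∈ H) with hM1
  set M2 := H.filter (fun z => a ∈ z ∧ z.erase a ∈ H) with hM2
  have hsplit1 : (H.filter fun z => a ∉ z).card = M1.card + (setS H a).card := by
    have e1 : setS H a = H.filter (fun z => a ∉ z ∧ insert a z ∉ H) := by
      apply Finset.filter_congr
      intro z hz
      constructor
      · intro h
        refine ⟨fun haz => h ?_, h⟩
        rwa [Finset.insert_eq_self.mpr haz]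
      · exact fun h => h.2
    rw [e1, hM1, ← Finset.card_union_of_disjoint, ← Finset.filter_or]
    · congr 1
      apply Finset.filter_congr
      intro z hz
      by_cases h : insert a z ∈ H <;> tauto
    · rw [Finset.disjoint_filter]
      tauto
  have hsplit2 : (H.filter fun z => a ∈ z).card = M2.card + (setP H a).card := by
    have e2 : setP H a = H.filter (fun z => a ∈ z ∧ z.erase a ∉ H) := rfl
    rw [e2, hM2, ← Finset.card_union_of_disjoint, ← Finset.filter_or]
    · congr 1
      apply Finset.filter_congr
      intro z hz
      by_cases h : z.erase a ∈ H <;> by_cases h2 : a ∈ z <;> tauto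
    · rw [Finset.disjoint_filter]
      tauto
  have hbij : M1.card = M2.card := by
    apply Finset.card_bij (fun z _ => insert a z)
    · intro z hz
      rw [hM1, Finset.mem_filter] at hz
      rw [hM2, Finset.mem_filter]
      refine ⟨hz.2.2, Finset.mem_insert_self _ _, ?_⟩
      rw [Finset.erase_insert hz.2.1]
      exact hz.1
    · intro z₁ h₁ z₂ h₂ h
      rw [hM1, Finset.mem_filter] at h₁ h₂
      rw [← Finset.erase_insert h₁.2.1, ← Finset.erase_insert h₂.2.1, h]
    · intro y hy
      rw [hM2, Finset.mem_filter] at hy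
      refine ⟨y.erase a, ?_, Finset.insert_erase hy.2.1⟩
      rw [hM1, Finset.mem_filter]
      rw [Finset.insert_erase hy.2.1]
      exact ⟨hy.2.2, Finset.notMem_erase _ _, hy.1⟩
  rw [hsplit1, hsplit2]
  push_cast
  omega

end AuxLemmas

/-- Proposition 5.5: |π_w(a)| − |σ_w(a)| = |P(𝔉,a)| − |S(𝔉,a)| for all a; hence
Frankl's conjecture holds for 𝔉 iff |π_w(a)| ≥ |σ_w(a)| for some a ∈ X;
moreover |π_w(a)| ≤ |P(𝔉,a)| and |σ_w(a)| ≤ |S(𝔉,a)|. -/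
theorem stmt_14 {α : Type*} [DecidableEq α] [Fintype α] [Nonempty α]
    (F : Finset (Finset α)) (hF : UnionClosed F)
    (w : List α) (hnd : w.Nodup) (hall : ∀ x : α, x ∈ w) :
    (∀ a : α, ((pureF F w a).card : ℤ) - (spurious F w a).card =
      ((setP F a).card : ℤ) - (setS F a).card) ∧
    ((∃ a : α, F.card ≤ 2 * (F.filter fun z => a ∈ z).card) ↔
      ∃ a : α, (spurious F w a).card ≤ (pureF F w a).card) ∧
    (∀ a : α, (pureF F w a).card ≤ (setP F a).card ∧
      (spurious F w a).card ≤ (setS F a).card) := by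
  classical
  set φ := riseWord F w with hφ
  set G := F.image φ with hG
  have hinj : ∀ z₁ ∈ F, ∀ z₂ ∈ F, φ z₁ = φ z₂ → z₁ = z₂ := riseWord_injOn w F
  have cardG : G.card = F.card := Finset.card_image_of_injOn fun x hx y hy h => hinj x hx y hy h
  have cardIm : ∀ (A : Finset (Finset α)), A ⊆ F → (A.image φ).card = A.card := by
    intro A hA
    exact Finset.card_image_of_injOn fun x hx y hy h => hinj x (hA hx) y (hA hy) h
  have main : ∀ a : α,
      ((pureF F w a).card : ℤ) - (spurious F w a).card =
        2 * (F.filter fun z => a ∈ z).card - F.card ∧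
      ((setP F a).card : ℤ) - (setS F a).card =
        2 * (F.filter fun z => a ∈ z).card - F.card ∧
      (spurious F w a).card ≤ (setS F a).card := by
    intro a
    -- rewrite spurious and pure as injective images
    have hspur : spurious F w a = (F.filter fun f => a ∉ f ∧ a ∈ φ f).image φ := by
      rw [spurious, Finset.filter_image, Finset.filter_filter]
    have hpure : pureF F w a = (F.filter fun f => a ∈ f ∧ (φ f).erase a ∉ G).image φ := by
      rw [pureF, Finset.filter_image, Finset.filter_filter]
    have cspur : (spurious F w a).card = (F.filter fun f => a ∉ f ∧ a ∈ φ f).card := by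
      rw [hspur]; exact cardIm _ (Finset.filter_subset _ _)
    have cpure : (pureF F w a).card = (F.filter fun f => a ∈ f ∧ (φ f).erase a ∉ G).card := by
      rw [hpure]; exact cardIm _ (Finset.filter_subset _ _)
    -- G_a card
    have hGa : (G.filter fun z => a ∈ z).card =
        (F.filter fun z => a ∈ z).card + (F.filter fun f => a ∉ f ∧ a ∈ φ f).card := by
      rw [hG, Finset.filter_image, cardIm _ (Finset.filter_subset _ _)]
      rw [show (F.filter fun f => a ∈ φ f) =
          (F.filter fun z => a ∈ z) ∪ (F.filter fun f => a ∉ f ∧ a ∈ φ f) by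
        rw [← Finset.filter_or]
        apply Finset.filter_congr
        intro f hf
        have hsub : f ⊆ φ f := subset_riseWord w F f
        by_cases h : a ∈ f
        · simp [h, hsub h]
        · simp [h]]
      rw [Finset.card_union_of_disjoint]
      rw [Finset.disjoint_filter]
      tauto
    -- setS G a is empty
    have hSG : setS G a = ∅ := by
      rw [setS, Finset.filter_eq_empty_iff]
      intro z hz
      simp only [not_not]
      exact full_final w F hF (hall a) z hz
    -- setP G a card
    have hPG : (setP G a).card =
        (F.filter fun f => a ∈ f ∧ (φ f).erase a ∉ G).card +
        (F.filter fun f => a ∉ f ∧ a ∈ φ f).card := by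
      rw [setP, hG, Finset.filter_image, cardIm _ (Finset.filter_subset _ _)]
      rw [show (F.filter fun f => a ∈ φ f ∧ (φ f).erase a ∉ F.image φ) =
          (F.filter fun f => a ∈ f ∧ (φ f).erase a ∉ G) ∪
          (F.filter fun f => a ∉ f ∧ a ∈ φ f) by
        rw [← Finset.filter_or]
        apply Finset.filter_congr
        intro f hf
        have hsub : f ⊆ φ f := subset_riseWord w F f
        constructor
        · intro h
          by_cases haf : a ∈ f
          · exact Or.inl ⟨haf, h.2⟩
          · exact Or.inr ⟨haf, h.1⟩
        · rintro (⟨h1, h2⟩ | ⟨h1, h2⟩)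
          · exact ⟨hsub h1, h2⟩
          · exact ⟨h2, spurious_erase_notMem hF hf h1 h2⟩]
      rw [Finset.card_union_of_disjoint]
      rw [Finset.disjoint_filter]
      tauto
    -- matching on G and F
    have hmG := matching G a
    have hmF := matching F a
    rw [hSG] at hmG
    -- complementary counts
    have hcF : (F.filter fun z => a ∈ z).card + (F.filter fun z => a ∉ z).card = F.card :=
      Finset.card_filter_add_card_filter_not (p := fun z => a ∈ z)
    have hcG : (G.filter fun z => a ∈ z).card + (G.filter fun z => a ∉ z).card = F.card := by
      rw [← cardG]
      exact Finset.card_filter_add_card_filter_not (p := fun z => a ∈ z)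
    -- spurious ≤ setS F a
    have hss : (spurious F w a).card ≤ (setS F a).card := by
      rw [cspur]
      apply Finset.card_le_card
      intro f hf
      rw [Finset.mem_filter] at hf
      rw [setS, Finset.mem_filter]
      refine ⟨hf.1, fun hins => ?_⟩
      exact rise_no_a w F f hF hf.2.1 hins hf.2.2
    refine ⟨?_, ?_, hss⟩
    · rw [cpure, cspur]
      simp only [Finset.card_empty, Nat.cast_zero, sub_zero] at hmG
      rw [hPG] at hmG
      rw [hGa] at hmG hcG
      push_cast at hmG hmF ⊢
      omega
    · simp only [Finset.card_empty, Nat.cast_zero, sub_zero] at hmG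
      rw [hPG] at hmG
      rw [hGa] at hmG hcG
      push_cast at hmG hmF ⊢
      omega
  refine ⟨fun a => by have := main a; omega, ?_, fun a => ?_⟩
  · apply exists_congr
    intro a
    have := main a
    have hcF : (F.filter fun z => a ∈ z).card ≤ F.card :=
      Finset.card_le_card (Finset.filter_subset _ _)
    omega
  · have := main a
    constructor
    · omega
    · exact this.2.2
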